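/- Let (θ,θ') be a factor pair of a set X such that X/θ is infinite, and let p be a prime. Then: (1) (θ,θ') is the least upper bound in Fact(X) of the set of p-atoms below it; (2) θ is the intersection of all φ such that (φ,φ') is a p-atom with (φ,φ') ≤ (θ,θ') for some φ'; (3) θ' is the union of all φ' such that (φ,φ') is a p-atom with (φ,φ') ≤ (θ,θ') for some φ. -/

import Mathlib

/-- A factor pair is a pair of equivalence relations with `θ ∩ θ' = Δ` and `θ ∘ θ' = ∇`. -/
def IsFactorPair {X : Type*} (θ θ' : Setoid X) : Prop :=
  (∀ x y : X, θ x y ∧ θ' x y ↔ x = y) ∧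
  ∀ x y : X, Relation.Comp (⇑θ) (⇑θ') x y

/-- `Fact X`, the set of factor pairs of `X`. -/
def FactPair (X : Type*) : Type _ :=
  {p : Setoid X × Setoid X // IsFactorPair p.1 p.2}

/-- The order on `Fact X`: `(θ,θ') ≤ (φ,φ')` iff `φ ⊆ θ`, `θ' ⊆ φ'` and `φ∘θ' = θ'∘φ`. -/
def FactLE {X : Type*} (p q : FactPair X) : Prop :=
  q.1.1 ≤ p.1.1 ∧ p.1.2 ≤ q.1.2 ∧
    Relation.Comp (⇑q.1.1) (⇑p.1.2) = Relation.Comp (⇑p.1.2) (⇑q.1.1)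

def FactLT {X : Type*} (p q : FactPair X) : Prop :=
  FactLE p q ∧ p ≠ q

/-- The orthocomplementation `(θ,θ')^⊥ = (θ',θ)` on `Fact X`. -/
def FactPerp {X : Type*} (p : FactPair X) : FactPair X :=
  ⟨(p.1.2, p.1.1), by
    obtain ⟨h1, h2⟩ := p.2
    refine ⟨fun x y => ⟨fun h => (h1 x y).1 ⟨h.2, h.1⟩, ?_⟩, fun x y => ?_⟩
    · rintro rfl
      exact ⟨p.1.2.refl' x, p.1.1.refl' x⟩
    · obtain ⟨z, hz1, hz2⟩ := h2 y x
      exact ⟨z, p.1.2.symm' hz2, p.1.1.symm' hz1⟩⟩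

/-- `0 = (∇,Δ)` in `Fact X`. -/
def FactZero (X : Type*) : FactPair X :=
  ⟨(⊤, ⊥), by
    refine ⟨fun x y => ⟨fun h => ?_, ?_⟩, fun x y => ⟨y, ?_, ?_⟩⟩
    · simpa [Setoid.bot_def] using h.2
    · rintro rfl
      exact ⟨(⊤ : Setoid X).refl' x, (⊥ : Setoid X).refl' x⟩
    · simp [Setoid.top_def]
    · simp [Setoid.bot_def]⟩

/-- `1 = (Δ,∇)` in `Fact X`. -/
def FactOne (X : Type*) : FactPair X :=
  ⟨(⊥, ⊤), by
    refine ⟨fun x y => ⟨fun h => ?_, ?_⟩, fun x y => ⟨x, ?_, ?_⟩⟩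
    · simpa [Setoid.bot_def] using h.1
    · rintro rfl
      exact ⟨(⊥ : Setoid X).refl' x, (⊤ : Setoid X).refl' x⟩
    · simp [Setoid.bot_def]
    · simp [Setoid.top_def]⟩

/-- An atom of `Fact X`. -/
def IsFactAtom {X : Type*} (a : FactPair X) : Prop :=
  FactLT (FactZero X) a ∧ ∀ x : FactPair X, FactLT (FactZero X) x → ¬ FactLT x a

/-- An `n`-relation: every equivalence class has exactly `n` elements. -/
def IsNRel {X : Type*} (n : ℕ) (θ : Setoid X) : Prop :=
  ∀ x : X, Nat.card {y // θ x y} = n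

/-- A `p`-atom: an atom `(φ,φ')` such that `φ'` is a `p`-relation. -/
def IsPAtom {X : Type*} (p : ℕ) (a : FactPair X) : Prop :=
  IsFactAtom a ∧ IsNRel p a.1.2

/-- The image `σ(θ) = {(σ x, σ y) : (x,y) ∈ θ}` of an equivalence relation under a
permutation. -/
def permSetoid {X : Type*} (σ : Equiv.Perm X) (θ : Setoid X) : Setoid X :=
  ⟨fun a b => θ (σ.symm a) (σ.symm b),
    ⟨fun a => θ.refl' _, fun h => θ.symm' h, fun h1 h2 => θ.trans' h1 h2⟩⟩

/-- The action `Γ(σ)(θ,θ') = (σ(θ),σ(θ'))` of a permutation on factor pairs. -/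
def permFactPair {X : Type*} (σ : Equiv.Perm X) (t : FactPair X) : FactPair X :=
  ⟨(permSetoid σ t.1.1, permSetoid σ t.1.2), by
    obtain ⟨h1, h2⟩ := t.2
    refine ⟨fun x y => ⟨fun h => ?_, ?_⟩, fun x y => ?_⟩
    · exact σ.symm.injective ((h1 (σ.symm x) (σ.symm y)).1 ⟨h.1, h.2⟩)
    · rintro rfl
      exact ⟨t.1.1.refl' _, t.1.2.refl' _⟩
    · obtain ⟨w, hw1, hw2⟩ := h2 (σ.symm x) (σ.symm y)
      refine ⟨σ w, ?_, ?_⟩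
      · show t.1.1 (σ.symm x) (σ.symm (σ w))
        simpa using hw1
      · show t.1.2 (σ.symm (σ w)) (σ.symm y)
        simpa using hw2⟩

/-- An automorphism of `Fact X`: a bijection preserving `≤` in both directions and
commuting with `⊥`. -/
def IsFactAut {X : Type*} (α : FactPair X → FactPair X) : Prop :=
  Function.Bijective α ∧
  (∀ p q : FactPair X, FactLE p q ↔ FactLE (α p) (α q)) ∧
  ∀ p : FactPair X, α (FactPerp p) = FactPerp (α p)

/-- `Eq*(X)`: the equivalence relations on `X` that are `n`-relations for some `n ≥ 1`. -/
def EqStar (X : Type*) : Type _ :=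
  {θ : Setoid X // ∃ n : ℕ, 0 < n ∧ IsNRel n θ}

/-- A regular equivalence relation: any two classes are equinumerous. -/
def IsRegularRel {X : Type*} (θ : Setoid X) : Prop :=
  ∀ x y : X, Nonempty ({z // θ x z} ≃ {z // θ y z})

/-- The action of a permutation on `Eq*(X)`. -/
def permEqStar {X : Type*} (σ : Equiv.Perm X) (θ : EqStar X) : EqStar X :=
  ⟨permSetoid σ θ.1, by
    obtain ⟨n, hn, hrel⟩ := θ.2
    refine ⟨n, hn, fun x => ?_⟩
    have e : {y // (permSetoid σ θ.1) x y} ≃ {y // θ.1 (σ.symm x) y} :=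
      σ.symm.subtypeEquiv fun y => Iff.rfl
    rw [Nat.card_congr e]
    exact hrel (σ.symm x)⟩

/-!
A factor pair `(θ, θ')` identifies `X` with `X/θ × X/θ'`. As `X/θ` is infinite, there are
bijections `e : X/θ ≃ X/θ × Fin p`, and each of them splits off a factor `Fin p`: the pair
`(ker (snd ∘ e), θ' ∩ ker (fst ∘ e))` is a factor pair below `(θ, θ')` whose second component is
a `p`-relation. For `p` prime such a pair is automatically an atom, since the classes of the second
component of anything below it have a common size dividing `p`. Choosing `e` so that two given
`θ`-classes land in one `fst`-fibre but in different `snd`-fibres shows that these `p`-atoms cut out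
`θ` and cover `θ'`, which gives (2) and (3); (1) follows from (2), (3) and the commutation of the
atoms with the first component of any upper bound.
-/

open Function

section

variable {X : Type*}

namespace Setoid

theorem comp_eq_of_comp_le {r s : Setoid X}
    (H : ∀ x y, Relation.Comp r s x y → Relation.Comp s r x y) :
    Relation.Comp r s = Relation.Comp s r := by
  funext x y
  refine propext ⟨H x y, fun ⟨z, hxz, hzy⟩ => ?_⟩
  obtain ⟨w, hyw, hwx⟩ := H y x ⟨z, r.symm' hzy, s.symm' hxz⟩
  exact ⟨w, r.symm' hwx, s.symm' hyw⟩

theorem isNRel_bot : IsNRel 1 (⊥ : Setoid X) := fun _ => by simp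

theorem dvd_card_of_isNRel {F : Type*} [Finite F] {s : Setoid F} {n : ℕ} (hs : IsNRel n s) :
    n ∣ Nat.card F := by
  have := Fintype.ofFinite (Quotient s)
  rw [← Nat.card_congr (Equiv.sigmaFiberEquiv (Quotient.mk s)), Nat.card_sigma]
  refine Finset.dvd_sum fun q _ => q.inductionOn fun x => ?_
  rw [← hs x]
  have e : {y // Quotient.mk s y = Quotient.mk s x} ≃ {y // s x y} :=
    Equiv.subtypeEquivRight fun y => Quotient.eq.trans (s.comm' (x := y))
  exact (Nat.card_congr e).symm.dvd

theorem dvd_of_le_of_isNRel [Nonempty X] {r s : Setoid X} {m n : ℕ} (hrs : r ≤ s)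
    (hr : IsNRel m r) (hs : IsNRel n s) (hn : n ≠ 0) : m ∣ n := by
  obtain ⟨z⟩ := ‹Nonempty X›
  have : Finite {y // s z y} := Nat.finite_of_card_ne_zero (hs z ▸ hn)
  rw [← hs z]
  refine dvd_card_of_isNRel (s := r.comap Subtype.val) fun u => ?_
  rw [← hr u.1]
  exact Nat.card_congr ((Equiv.subtypeSubtypeEquivSubtypeInter _ _).trans
    (Equiv.subtypeEquivRight fun y => ⟨And.right, fun hy => ⟨s.trans' u.2 (hrs hy), hy⟩⟩))

theorem eq_of_le_of_isNRel {r s : Setoid X} {n : ℕ} (hrs : r ≤ s) (hr : IsNRel n r)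
    (hs : IsNRel n s) (hn : n ≠ 0) : r = s := by
  refine le_antisymm hrs fun x y hxy => ?_
  have hfin : {y | s x y}.Finite :=
    Set.finite_coe_iff.mp (Nat.finite_of_card_ne_zero (hs x ▸ hn))
  have hcard : {y | s x y}.ncard ≤ {y | r x y}.ncard := by
    rw [← Nat.card_coe_set_eq, ← Nat.card_coe_set_eq]
    exact ((hs x).trans (hr x).symm).le
  have : {y | r x y} = {y | s x y} :=
    Set.eq_of_subset_of_ncard_le (fun _ hy => hrs hy) hcard hfin
  exact this.symm.subset hxy

end Setoid

namespace IsFactorPair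

variable {θ θ' : Setoid X}

theorem eq_of_rel (h : IsFactorPair θ θ') {x y : X} (h₁ : θ x y) (h₂ : θ' x y) : x = y :=
  (h.1 x y).1 ⟨h₁, h₂⟩

theorem symm (h : IsFactorPair θ θ') : IsFactorPair θ' θ :=
  (FactPerp ⟨(θ, θ'), h⟩).2

theorem eq_of_le {ψ : Setoid X} (h : IsFactorPair θ θ') (hψ : IsFactorPair ψ θ') (hle : ψ ≤ θ) :
    ψ = θ := by
  refine le_antisymm hle fun x y hxy => ?_
  obtain ⟨z, hxz, hzy⟩ := hψ.2 x y
  obtain rfl : z = y := h.eq_of_rel (θ.trans' (θ.symm' (hle hxz)) hxy) hzy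
  exact hxz

theorem bijective_mk (h : IsFactorPair θ θ') :
    Bijective fun x => (Quotient.mk θ x, Quotient.mk θ' x) := by
  refine ⟨fun x y hxy => ?_, fun ⟨a, b⟩ => a.inductionOn₂ b fun x y => ?_⟩
  · simp only [Prod.mk.injEq, Quotient.eq] at hxy
    exact h.eq_of_rel hxy.1 hxy.2
  · obtain ⟨z, hxz, hzy⟩ := h.2 x y
    exact ⟨z, Prod.ext (Quotient.sound (θ.symm' hxz)) (Quotient.sound hzy)⟩

noncomputable def classEquivQuotient (h : IsFactorPair θ θ') (x : X) :
    {y // θ' x y} ≃ Quotient θ :=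
  Equiv.ofBijective (fun y => Quotient.mk θ y.1)
    ⟨fun y z hyz => Subtype.ext <|
      h.eq_of_rel (Quotient.exact hyz) (θ'.trans' (θ'.symm' y.2) z.2),
    fun b => b.inductionOn fun u => by
      obtain ⟨z, hxz, hzu⟩ := h.symm.2 x u
      exact ⟨⟨z, hxz⟩, Quotient.sound hzu⟩⟩

theorem isNRel_card_quotient (h : IsFactorPair θ θ') : IsNRel (Nat.card (Quotient θ)) θ' :=
  fun x => Nat.card_congr (h.classEquivQuotient x)

end IsFactorPair

theorem isFactorPair_ker {A B : Type*} {f : X → A} {g : X → B}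
    (hfg : Bijective fun x => (f x, g x)) : IsFactorPair (Setoid.ker f) (Setoid.ker g) := by
  refine ⟨fun x y => ⟨fun hxy => hfg.1 (Prod.ext hxy.1 hxy.2), ?_⟩, fun x y => ?_⟩
  · rintro rfl
    exact ⟨rfl, rfl⟩
  · obtain ⟨z, hz⟩ := hfg.2 (f x, g y)
    exact ⟨z, (congrArg Prod.fst hz).symm, congrArg Prod.snd hz⟩

theorem factZero_le (a : FactPair X) : FactLE (FactZero X) a := by
  refine ⟨le_top, bot_le, ?_⟩
  change Relation.Comp a.1.1 ⇑(⊥ : Setoid X) = Relation.Comp ⇑(⊥ : Setoid X) a.1.1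
  rw [Setoid.bot_def, Relation.comp_eq, Relation.eq_comp]

theorem FactLE.trans {a b c : FactPair X} (hab : FactLE a b) (hbc : FactLE b c) :
    FactLE a c := by
  obtain ⟨hba, hab₂, hcomm_ab⟩ := hab
  obtain ⟨hcb, hbc₂, hcomm_bc⟩ := hbc
  refine ⟨hcb.trans hba, hab₂.trans hbc₂, Setoid.comp_eq_of_comp_le fun x y ⟨z, hxz, hzy⟩ => ?_⟩
  obtain ⟨w, hxw, hwy⟩ : Relation.Comp a.1.2 b.1.1 x y := hcomm_ab ▸ ⟨z, hcb hxz, hzy⟩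
  obtain ⟨v, hxv, hvy⟩ : Relation.Comp b.1.2 c.1.1 x y := hcomm_bc ▸ ⟨z, hxz, hab₂ hzy⟩
  obtain rfl : w = v := b.2.eq_of_rel (b.1.1.trans' hwy (b.1.1.symm' (hcb hvy)))
    (b.1.2.trans' (b.1.2.symm' (hab₂ hxw)) hxv)
  exact ⟨w, hxw, hvy⟩

theorem FactLE.eq_factZero_or_eq [Nonempty X] {p : ℕ} (hp : p.Prime) {a x : FactPair X}
    (ha : IsNRel p a.1.2) (hxa : FactLE x a) : x = FactZero X ∨ x = a := by
  obtain ⟨⟨χ, χ'⟩, hx⟩ := x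
  obtain ⟨haχ, hχ'a, -⟩ := hxa
  have hχ' := hx.isNRel_card_quotient
  have hdvd := Setoid.dvd_of_le_of_isNRel hχ'a hχ' ha hp.ne_zero
  rcases hp.eq_one_or_self_of_dvd _ hdvd with h1 | hpχ
  · obtain rfl : ⊥ = χ' :=
      Setoid.eq_of_le_of_isNRel bot_le Setoid.isNRel_bot (h1 ▸ hχ') one_ne_zero
    obtain rfl : χ = ⊤ := (FactZero X).2.eq_of_le hx le_top
    exact .inl rfl
  · obtain rfl : χ' = a.1.2 := Setoid.eq_of_le_of_isNRel hχ'a (hpχ ▸ hχ') ha hp.ne_zero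
    obtain rfl : a.1.1 = χ := hx.eq_of_le a.2 haχ
    exact .inr rfl

theorem isPAtom_of_isNRel [Nonempty X] {p : ℕ} (hp : p.Prime) {a : FactPair X}
    (ha : IsNRel p a.1.2) : IsPAtom p a := by
  refine ⟨⟨⟨factZero_le a, fun h0 => ?_⟩, fun x hx hxa => ?_⟩, ha⟩
  · subst h0
    obtain ⟨x⟩ := ‹Nonempty X›
    exact hp.ne_one ((ha x).symm.trans (Setoid.isNRel_bot x))
  · rcases hxa.1.eq_factZero_or_eq hp ha with rfl | rfl
    exacts [hx.2 rfl, hxa.2 rfl]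

section pAtomOfEquiv

variable {θ θ' : Setoid X} (h : IsFactorPair θ θ') {p : ℕ} (e : Quotient θ ≃ Quotient θ × Fin p)

def pAtomOfEquiv : FactPair X :=
  ⟨(Setoid.ker fun x => (e (Quotient.mk θ x)).2,
    Setoid.ker fun x => ((e (Quotient.mk θ x)).1, Quotient.mk θ' x)),
    isFactorPair_ker <| by
      let E : Quotient θ × Quotient θ' ≃ Fin p × (Quotient θ × Quotient θ') :=
        { toFun := fun ab => ((e ab.1).2, (e ab.1).1, ab.2)
          invFun := fun jab => (e.symm (jab.2.1, jab.1), jab.2.2)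
          left_inv := fun _ => by simp
          right_inv := fun _ => by simp }
      exact E.bijective.comp h.bijective_mk⟩

theorem isNRel_pAtomOfEquiv [Nonempty X] : IsNRel p (pAtomOfEquiv h e).1.2 := by
  have : Nonempty (Quotient θ) := .map (Quotient.mk θ) ‹_›
  have hsurj : Surjective fun x => (e (Quotient.mk θ x)).2 :=
    Prod.snd_surjective.comp (e.surjective.comp Quotient.mk_surjective)
  have hcard : Nat.card (Quotient (pAtomOfEquiv h e).1.1) = p :=
    (Nat.card_congr (Setoid.quotientKerEquivOfSurjective _ hsurj)).trans (Nat.card_fin p)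
  exact fun x => ((pAtomOfEquiv h e).2.isNRel_card_quotient x).trans hcard

theorem pAtomOfEquiv_le : FactLE (pAtomOfEquiv h e) ⟨(θ, θ'), h⟩ := by
  refine ⟨fun x y hxy => congrArg (fun b => (e b).2) (Quotient.sound hxy),
    fun x y hxy => Quotient.exact (congrArg Prod.snd hxy),
    Setoid.comp_eq_of_comp_le fun x y ⟨z, hxz, hzy⟩ => ?_⟩
  obtain ⟨w, hw⟩ := h.bijective_mk.2 (Quotient.mk θ y, Quotient.mk θ' x)
  simp only [Prod.mk.injEq] at hw
  refine ⟨w, Prod.ext ?_ hw.2.symm, Quotient.exact hw.1⟩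
  change (e (Quotient.mk θ x)).1 = (e (Quotient.mk θ w)).1
  rw [hw.1, Quotient.sound (s := θ) hxz]
  exact (Prod.mk.inj hzy).1

end pAtomOfEquiv

theorem exists_perm_apply_eq_apply_eq {B : Type*} {u v s t : B} (huv : u ≠ v) (hst : s ≠ t) :
    ∃ σ : Equiv.Perm B, σ u = s ∧ σ v = t := by
  classical
  refine ⟨(Equiv.swap u s).trans (Equiv.swap (Equiv.swap u s v) t), ?_, Equiv.swap_apply_left _ _⟩
  have hsv := (Equiv.swap u s).injective.ne huv
  rw [Equiv.swap_apply_left] at hsv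
  simp only [Equiv.trans_apply, Equiv.swap_apply_left]
  exact Equiv.swap_apply_of_ne_of_ne hsv hst

theorem exists_equiv_prod_fin_fst_eq_snd_ne {A : Type*} [Infinite A] {p : ℕ} (hp : 1 < p)
    (a b : A) :
    ∃ e : A ≃ A × Fin p, (e a).1 = (e b).1 ∧ (a ≠ b → (e a).2 ≠ (e b).2) := by
  obtain ⟨g⟩ : Nonempty (A ≃ A × Fin p) := by
    rw [← Cardinal.eq, Cardinal.mk_prod, Cardinal.mk_fin, Cardinal.lift_uzero,
      Cardinal.lift_natCast, Cardinal.mul_eq_left (Cardinal.aleph0_le_mk A)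
        ((Cardinal.natCast_lt_aleph0 (n := p)).le.trans (Cardinal.aleph0_le_mk A))
        (Nat.cast_ne_zero.2 (by omega))]
  by_cases hab : a = b
  · exact ⟨g, hab ▸ rfl, fun hne => absurd hab hne⟩
  obtain ⟨σ, hσa, hσb⟩ := exists_perm_apply_eq_apply_eq (g.injective.ne hab)
    (s := ((g a).1, ⟨0, by omega⟩)) (t := ((g a).1, ⟨1, hp⟩)) (by simp [Fin.ext_iff])
  exact ⟨g.trans σ, by simp [hσa, hσb], fun _ => by simp [hσa, hσb]⟩

theorem exists_pAtom_le_separating {θ θ' : Setoid X} (h : IsFactorPair θ θ')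
    [Infinite (Quotient θ)] {p : ℕ} (hp : p.Prime) (x y : X) :
    ∃ a : FactPair X, IsPAtom p a ∧ FactLE a ⟨(θ, θ'), h⟩ ∧
      (θ' x y → a.1.2 x y) ∧ (a.1.1 x y → θ x y) := by
  have : Nonempty X := ⟨x⟩
  obtain ⟨e, he₁, he₂⟩ :=
    exists_equiv_prod_fin_fst_eq_snd_ne hp.one_lt (Quotient.mk θ x) (Quotient.mk θ y)
  refine ⟨pAtomOfEquiv h e, isPAtom_of_isNRel hp (isNRel_pAtomOfEquiv h e), pAtomOfEquiv_le h e,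
    fun hxy => Prod.ext he₁ (Quotient.sound hxy), fun hxy => ?_⟩
  by_contra hne
  exact he₂ (fun hq => hne (Quotient.exact hq)) hxy

end

/-- Let `(θ,θ')` be a factor pair of `X` with `X/θ` infinite and `p` prime. Then
(1) `(θ,θ')` is the least upper bound of the `p`-atoms below it;
(2) `θ` is the intersection of the first components of the `p`-atoms below `(θ,θ')`;
(3) `θ'` is the union of the second components of the `p`-atoms below `(θ,θ')`. -/
theorem factPair_sup_of_p_atoms (X : Type*) (θ θ' : Setoid X) (h : IsFactorPair θ θ')
    (hinf : Infinite (Quotient θ)) (p : ℕ) (hp : p.Prime) :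
    (∀ u : FactPair X,
      (∀ a : FactPair X, IsPAtom p a → FactLE a ⟨(θ, θ'), h⟩ → FactLE a u) ↔
        FactLE ⟨(θ, θ'), h⟩ u) ∧
    (∀ x y : X, θ x y ↔
      ∀ a : FactPair X, IsPAtom p a → FactLE a ⟨(θ, θ'), h⟩ → a.1.1 x y) ∧
    (∀ x y : X, θ' x y ↔
      ∃ a : FactPair X, IsPAtom p a ∧ FactLE a ⟨(θ, θ'), h⟩ ∧ a.1.2 x y) := by
  have hsep := exists_pAtom_le_separating h hp
  have hθ : ∀ x y : X, θ x y ↔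
      ∀ a : FactPair X, IsPAtom p a → FactLE a ⟨(θ, θ'), h⟩ → a.1.1 x y := fun x y =>
    ⟨fun hxy _ _ hat => hat.1 hxy, fun H =>
      let ⟨a, ha, hat, _, haθ⟩ := hsep x y
      haθ (H a ha hat)⟩
  have hθ' : ∀ x y : X, θ' x y ↔
      ∃ a : FactPair X, IsPAtom p a ∧ FactLE a ⟨(θ, θ'), h⟩ ∧ a.1.2 x y := fun x y =>
    ⟨fun hxy =>
      let ⟨a, ha, hat, hθ'a, _⟩ := hsep x y
      ⟨a, ha, hat, hθ'a hxy⟩,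
      fun ⟨_, _, hat, hxy⟩ => hat.2.1 hxy⟩
  refine ⟨fun u => ⟨fun H => ⟨fun x y hxy => (hθ x y).2 fun a ha hat => (H a ha hat).1 hxy,
    fun x y hxy => ?_, Setoid.comp_eq_of_comp_le fun x y ⟨w, hxw, hwy⟩ => ?_⟩,
    fun htu _ _ hat => hat.trans htu⟩, hθ, hθ'⟩
  · obtain ⟨a, ha, hat, hxy⟩ := (hθ' x y).1 hxy
    exact (H a ha hat).2.1 hxy
  · obtain ⟨a, ha, hat, hwy⟩ := (hθ' w y).1 hwy
    obtain ⟨z, hxz, hzy⟩ : Relation.Comp a.1.2 u.1.1 x y := (H a ha hat).2.2 ▸ ⟨w, hxw, hwy⟩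
    exact ⟨z, hat.2.1 hxz, hzy⟩
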